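/- Let Θ = {1, …, N}, let V_θ, F_θ : Δ(X) → ℝ be continuous for each θ ∈ Θ, let π ∈ Δ(Θ) be a probability vector, and fix μ ∈ Δ(X). Consider the screening problem: maximize Σ_{θ=1}^N π(θ)·E_{P_θ}[V_θ] over menus (P_1, …, P_N) ∈ Δ²(X)^N subject to the barycenter constraints E_{P_θ}[ν] = μ for all θ and the incentive-compatibility constraints E_{P_θ}[F_θ] ≥ E_{P_{θ'}}[F_θ] for all θ, θ' ∈ Θ. Then the supremum is attained, and it is attained by a menu (P*_1, …, P*_N) in which each P*_θ has support of size at most (N+2)·|X|. -/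

import Mathlib

open MeasureTheory Topology Filter

noncomputable section

/-- Expected value `E_P[W] = ∫ W(ν) dP(ν)` of a function `W : Δ(X) → ℝ`
under a Borel probability measure `P ∈ Δ²(X)` on the simplex `Δ(X)`. -/
def expct {X : Type*} [Fintype X] (P : ProbabilityMeasure (stdSimplex ℝ X))
    (W : stdSimplex ℝ X → ℝ) : ℝ :=
  ∫ ν, W ν ∂(P : Measure (stdSimplex ℝ X))

/-- `P ∈ Δ²(X)` has barycenter `E_P[ν] = μ`. -/
def isBary {X : Type*} [Fintype X] (P : ProbabilityMeasure (stdSimplex ℝ X))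
    (μ : stdSimplex ℝ X) : Prop :=
  ∀ x : X, expct P (fun ν => (ν : X → ℝ) x) = (μ : X → ℝ) x

/-- `P ∈ Δ²(X)` has support of size at most `m`: it is a convex combination of at
most `m` Dirac measures on `Δ(X)`. -/
def finSupp {X : Type*} [Fintype X] (P : ProbabilityMeasure (stdSimplex ℝ X)) (m : ℕ) : Prop :=
  ∃ (p : Fin m → ℝ) (ν : Fin m → stdSimplex ℝ X),
    (∀ j, 0 ≤ p j) ∧ (∑ j, p j = 1) ∧
    (P : Measure (stdSimplex ℝ X)) = ∑ j, ENNReal.ofReal (p j) • Measure.dirac (ν j)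

/-- The information possibility set
`𝒱(μ) = {(E_P[V^1], …, E_P[V^n]) : P ∈ Δ²(X), E_P[ν] = μ} ⊆ ℝ^n`. -/
def VSet {X : Type*} [Fintype X] {n : ℕ} (V : Fin n → stdSimplex ℝ X → ℝ)
    (μ : stdSimplex ℝ X) : Set (Fin n → ℝ) :=
  {v | ∃ P : ProbabilityMeasure (stdSimplex ℝ X), isBary P μ ∧ ∀ i, expct P (V i) = v i}

/-! Feasible menus form a closed subset of the compact space `Δ²(X)^N` (Prokhorov), since the
barycenter and incentive constraints are integrals of continuous functions; hence the continuous
objective attains its maximum. Each `P_θ` of an optimal menu is then replaced by a finitely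
supported measure with the same moments `ν ↦ ν x`, `F`, `V_θ`: the moment vector of `P_θ` lies in
the convex hull of the compact image of `Δ(X)` under the moment map, which sits in the hyperplane
`∑ x, ν x = 1` of `ℝ^X × ℝ^(N+1)`, so Carathéodory's theorem gives `|X| + N + 1 ≤ (N + 2) |X|`
atoms. -/

open Module Set

section Caratheodory

variable {E : Type*}

theorem exists_fin_convexCombination_of_mem_convexHull [AddCommGroup E] [Module ℝ E]
    [FiniteDimensional ℝ E] {s : Set E} {x : E} (hx : x ∈ convexHull ℝ s) {m : ℕ}
    (hm : finrank ℝ (vectorSpan ℝ s) < m) :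
    ∃ (w : Fin m → ℝ) (z : Fin m → E), w ∈ stdSimplex ℝ (Fin m) ∧ (∀ j, z j ∈ s) ∧
      ∑ j, w j • z j = x := by
  obtain ⟨ι, _, z, w, hzs, hind, hw0, hw1, rfl⟩ := eq_pos_convex_span_of_mem_convexHull hx
  have hcard : Fintype.card ι ≤ Fintype.card (Fin m) := by
    have := Submodule.finrank_mono (vectorSpan_mono ℝ hzs)
    have := hind.card_le_finrank_succ
    simp only [Fintype.card_fin]; omega
  obtain ⟨e⟩ := Function.Embedding.nonempty_of_card_le hcard
  obtain ⟨i₀⟩ : Nonempty ι := by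
    by_contra h
    simp [not_nonempty_iff.mp h] at hw1
  -- zero weights outside the image of `e`
  refine ⟨Function.extend e w 0, Function.extend e z fun _ => z i₀, ⟨fun j => ?_, ?_⟩,
    fun j => ?_, ?_⟩
  · rw [Function.extend_def]; split_ifs
    · exact (hw0 _).le
    · rfl
  · rw [← hw1]
    refine (Fintype.sum_of_injective e e.injective w _ (fun j hj => ?_) fun i => ?_).symm
    · simp [Function.extend_apply' _ _ _ hj]
    · simp [e.injective.extend_apply]
  · rw [Function.extend_def]; split_ifs <;> exact hzs (mem_range_self _)
  · refine (Fintype.sum_of_injective e e.injective _ _ (fun j hj => ?_) fun i => ?_).symm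
    · simp [Function.extend_apply' _ _ _ hj]
    · simp [e.injective.extend_apply]

theorem IsCompact.convexHull [NormedAddCommGroup E] [NormedSpace ℝ E] [FiniteDimensional ℝ E]
    {K : Set E} (hK : IsCompact K) : IsCompact (convexHull ℝ K) := by
  set m := finrank ℝ E + 1
  have hK' : _root_.convexHull ℝ K =
      (fun q : (Fin m → ℝ) × (Fin m → E) => ∑ j, q.1 j • q.2 j) ''
        (stdSimplex ℝ (Fin m) ×ˢ univ.pi fun _ => K) := by
    refine Subset.antisymm (fun x hx => ?_) ?_
    · obtain ⟨w, z, hw, hz, rfl⟩ := exists_fin_convexCombination_of_mem_convexHull hx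
        (Nat.lt_succ_of_le (Submodule.finrank_le _))
      exact ⟨(w, z), ⟨hw, fun j _ => hz j⟩, rfl⟩
    · rintro _ ⟨⟨w, z⟩, ⟨hw, hz⟩, rfl⟩
      exact (convex_convexHull ℝ K).sum_mem (fun j _ => hw.1 j) hw.2
        fun j _ => subset_convexHull ℝ K (hz j (mem_univ j))
  rw [hK']
  exact ((isCompact_stdSimplex ℝ _).prod (isCompact_univ_pi fun _ => hK)).image (by fun_prop)

theorem exists_fin_convexCombination_eq_integral {Ω : Type*} [TopologicalSpace Ω]
    [CompactSpace Ω] [MeasurableSpace Ω] [OpensMeasurableSpace Ω] [NormedAddCommGroup E]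
    [NormedSpace ℝ E] [FiniteDimensional ℝ E] (μ : Measure Ω) [IsProbabilityMeasure μ]
    {g : Ω → E} (hg : Continuous g) {m : ℕ} (hm : finrank ℝ (vectorSpan ℝ (range g)) < m) :
    ∃ (w : Fin m → ℝ) (z : Fin m → Ω), w ∈ stdSimplex ℝ (Fin m) ∧
      ∑ j, w j • g (z j) = ∫ ω, g ω ∂μ := by
  have hmem : ∫ ω, g ω ∂μ ∈ convexHull ℝ (range g) :=
    (convex_convexHull ℝ _).integral_mem (isCompact_range hg).convexHull.isClosed
      (ae_of_all _ fun ω => subset_convexHull ℝ _ (mem_range_self ω))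
      (hg.integrable_of_hasCompactSupport (.of_compactSpace g))
  obtain ⟨w, y, hw, hy, hsum⟩ := exists_fin_convexCombination_of_mem_convexHull hmem hm
  choose z hz using hy
  exact ⟨w, z, hw, by simpa only [hz] using hsum⟩

theorem finrank_vectorSpan_lt_of_forall_eq {V : Type*} [AddCommGroup V] [Module ℝ V]
    [FiniteDimensional ℝ V] {ℓ : V →ₗ[ℝ] ℝ} (hℓ : ℓ ≠ 0) {s : Set V} {c : ℝ}
    (hs : ∀ v ∈ s, ℓ v = c) : finrank ℝ (vectorSpan ℝ s) < finrank ℝ V := by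
  have hker : vectorSpan ℝ s ≤ LinearMap.ker ℓ := by
    rw [vectorSpan_def, Submodule.span_le]
    rintro _ ⟨a, ha, b, hb, rfl⟩
    simp [hs a ha, hs b hb]
  exact (Submodule.finrank_mono hker).trans_lt
    (Submodule.finrank_lt fun h => hℓ (LinearMap.ker_eq_top.1 h))

end Caratheodory

section Screening

variable {X : Type*} [Fintype X] {N : ℕ}

theorem finrank_vectorSpan_range_stdSimplex_prod_lt [Nonempty X] {ι : Type*} [Fintype ι]
    (h : stdSimplex ℝ X → ι → ℝ) :
    finrank ℝ (vectorSpan ℝ (range fun ν : stdSimplex ℝ X => ((ν : X → ℝ), h ν))) <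
      Fintype.card X + Fintype.card ι := by
  classical
  let ℓ : (X → ℝ) × (ι → ℝ) →ₗ[ℝ] ℝ := (∑ x, LinearMap.proj x) ∘ₗ LinearMap.fst ℝ _ _
  have hℓ : ℓ ≠ 0 := by
    obtain ⟨x₀⟩ := ‹Nonempty X›
    intro h0
    simpa [ℓ] using LinearMap.congr_fun h0 (Pi.single x₀ 1, 0)
  simpa using finrank_vectorSpan_lt_of_forall_eq hℓ (c := 1) (by
    rintro _ ⟨ν, rfl⟩
    simp [ℓ])

def diracMixture {Ω : Type*} [MeasurableSpace Ω] {m : ℕ} (w : stdSimplex ℝ (Fin m))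
    (z : Fin m → Ω) : ProbabilityMeasure Ω :=
  ⟨∑ j, ENNReal.ofReal (w j) • Measure.dirac (z j), ⟨by
    simp only [Measure.finsetSum_apply, Measure.smul_apply, measure_univ, smul_eq_mul, mul_one]
    rw [← ENNReal.ofReal_sum_of_nonneg fun j _ => stdSimplex.zero_le w j,
      stdSimplex.sum_eq_one w, ENNReal.ofReal_one]⟩⟩

theorem expct_diracMixture {m : ℕ} (w : stdSimplex ℝ (Fin m)) (z : Fin m → stdSimplex ℝ X)
    (f : stdSimplex ℝ X → ℝ) : expct (diracMixture w z) f = ∑ j, w j * f (z j) := by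
  rw [expct, diracMixture, ProbabilityMeasure.coe_mk,
    integral_finsetSum_measure fun j _ => (integrable_dirac enorm_lt_top).smul_measure
      ENNReal.ofReal_ne_top]
  simp [integral_smul_measure]

theorem finSupp_diracMixture {m : ℕ} (w : stdSimplex ℝ (Fin m)) (z : Fin m → stdSimplex ℝ X) :
    finSupp (diracMixture w z) m :=
  ⟨w, z, stdSimplex.zero_le w, stdSimplex.sum_eq_one w, rfl⟩

theorem exists_diracMixture_expct_eq [Nonempty X] {ι : Type*} [Fintype ι]
    (P : ProbabilityMeasure (stdSimplex ℝ X)) {h : ι → stdSimplex ℝ X → ℝ}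
    (hh : ∀ i, Continuous (h i)) {m : ℕ} (hm : Fintype.card X + Fintype.card ι ≤ m) :
    ∃ (w : stdSimplex ℝ (Fin m)) (z : Fin m → stdSimplex ℝ X),
      (∀ x, expct (diracMixture w z) (fun ν => (ν : X → ℝ) x) = expct P (fun ν => ν x)) ∧
      ∀ i, expct (diracMixture w z) (h i) = expct P (h i) := by
  set G : stdSimplex ℝ X → (X → ℝ) × (ι → ℝ) := fun ν => ((ν : X → ℝ), fun i => h i ν)
  have hG : Continuous G := by fun_prop
  obtain ⟨w, z, hw, hsum⟩ := exists_fin_convexCombination_eq_integral (P : Measure _) hG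
    ((finrank_vectorSpan_range_stdSimplex_prod_lt _).trans_le hm)
  have hL : ∀ L : (X → ℝ) × (ι → ℝ) →L[ℝ] ℝ,
      expct (diracMixture ⟨w, hw⟩ z) (L ∘ G) = expct P (L ∘ G) := by
    intro L
    rw [expct_diracMixture, expct, Function.comp_def,
      L.integral_comp_comm (hG.integrable_of_hasCompactSupport (.of_compactSpace G)), ← hsum,
      map_sum]
    simp only [map_smul, smul_eq_mul]
    rfl
  exact ⟨⟨w, hw⟩, z, fun x => hL (.proj (φ := fun _ : X => ℝ) x ∘L .fst ℝ _ _),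
    fun i => hL (.proj (φ := fun _ : ι => ℝ) i ∘L .snd ℝ _ _)⟩

def IsFeasibleMenu (F : Fin N → stdSimplex ℝ X → ℝ) (μ : stdSimplex ℝ X)
    (P : Fin N → ProbabilityMeasure (stdSimplex ℝ X)) : Prop :=
  (∀ θ, isBary (P θ) μ) ∧ ∀ θ θ', expct (P θ') (F θ) ≤ expct (P θ) (F θ)

theorem continuous_expct {W : stdSimplex ℝ X → ℝ} (hW : Continuous W) :
    Continuous fun P : ProbabilityMeasure (stdSimplex ℝ X) => expct P W :=
  ProbabilityMeasure.continuous_integral_continuousMap (⟨W, hW⟩ : C(stdSimplex ℝ X, ℝ))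

theorem isClosed_setOf_isFeasibleMenu {F : Fin N → stdSimplex ℝ X → ℝ}
    (hF : ∀ θ, Continuous (F θ)) (μ : stdSimplex ℝ X) : IsClosed {P | IsFeasibleMenu F μ P} := by
  have hcont : ∀ θ {W : stdSimplex ℝ X → ℝ}, Continuous W →
      Continuous fun P : Fin N → ProbabilityMeasure (stdSimplex ℝ X) => expct (P θ) W :=
    fun θ _ hW => (continuous_expct hW).comp (continuous_apply θ)
  simp only [IsFeasibleMenu, isBary, ofPred_and, ofPred_forall]
  exact .inter (isClosed_iInter fun θ => isClosed_iInter fun x =>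
      isClosed_eq (hcont θ ((continuous_apply x).comp continuous_subtype_val)) continuous_const)
    (isClosed_iInter fun θ => isClosed_iInter fun θ' =>
      isClosed_le (hcont θ' (hF θ)) (hcont θ (hF θ)))

theorem exists_isFeasibleMenu_forall_le {V F : Fin N → stdSimplex ℝ X → ℝ}
    (hV : ∀ θ, Continuous (V θ)) (hF : ∀ θ, Continuous (F θ)) (π : Fin N → ℝ)
    (μ : stdSimplex ℝ X) :
    ∃ P, IsFeasibleMenu F μ P ∧ ∀ Q, IsFeasibleMenu F μ Q →
      ∑ θ, π θ * expct (Q θ) (V θ) ≤ ∑ θ, π θ * expct (P θ) (V θ) := by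
  have hdirac : IsFeasibleMenu F μ fun _ => ⟨Measure.dirac μ, inferInstance⟩ :=
    ⟨fun θ x => by simp [expct], fun θ θ' => le_rfl⟩
  obtain ⟨P, hP, hmax⟩ := (isClosed_setOf_isFeasibleMenu hF μ).isCompact.exists_isMaxOn
    (f := fun P => ∑ θ, π θ * expct (P θ) (V θ)) ⟨_, hdirac⟩
    (continuous_finsetSum _ fun θ _ =>
      continuous_const.mul ((continuous_expct (hV θ)).comp (continuous_apply θ))).continuousOn
  exact ⟨P, hP, fun Q hQ => hmax hQ⟩

theorem exists_isFeasibleMenu_finSupp [Nonempty X] {V F : Fin N → stdSimplex ℝ X → ℝ}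
    (hV : ∀ θ, Continuous (V θ)) (hF : ∀ θ, Continuous (F θ)) {μ : stdSimplex ℝ X}
    {P₀ : Fin N → ProbabilityMeasure (stdSimplex ℝ X)} (hP₀ : IsFeasibleMenu F μ P₀) {m : ℕ}
    (hm : Fintype.card X + N + 1 ≤ m) :
    ∃ P, IsFeasibleMenu F μ P ∧ (∀ θ, expct (P θ) (V θ) = expct (P₀ θ) (V θ)) ∧
      ∀ θ, finSupp (P θ) m := by
  have hcard : Fintype.card X + Fintype.card (Option (Fin N)) ≤ m := by simpa [← add_assoc]
  choose w z hbary hmom using fun θ =>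
    exists_diracMixture_expct_eq (P₀ θ) (h := fun i => i.elim (V θ) F)
      (fun i => i.rec (hV θ) hF) hcard
  refine ⟨fun θ => diracMixture (w θ) (z θ), ⟨fun θ x => ?_, fun θ θ' => ?_⟩,
    fun θ => hmom θ none, fun θ => finSupp_diracMixture _ _⟩
  · rw [hbary θ x, hP₀.1 θ x]
  · exact (hmom θ' (some θ)).trans_le ((hP₀.2 θ θ').trans (hmom θ (some θ)).ge)

end Screening

theorem statement_19_general {X : Type*} [Fintype X] [Nonempty X] {N : ℕ}
    (V F : Fin N → stdSimplex ℝ X → ℝ)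
    (hV : ∀ θ, Continuous (V θ)) (hF : ∀ θ, Continuous (F θ))
    (π : Fin N → ℝ)
    (μ : stdSimplex ℝ X) :
    ∃ P : Fin N → ProbabilityMeasure (stdSimplex ℝ X),
      (∀ θ, isBary (P θ) μ) ∧
      (∀ θ θ', expct (P θ') (F θ) ≤ expct (P θ) (F θ)) ∧
      (∀ θ, finSupp (P θ) ((N + 2) * Fintype.card X)) ∧
      ∀ Q : Fin N → ProbabilityMeasure (stdSimplex ℝ X),
        (∀ θ, isBary (Q θ) μ) →
        (∀ θ θ', expct (Q θ') (F θ) ≤ expct (Q θ) (F θ)) →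
        ∑ θ, π θ * expct (Q θ) (V θ) ≤ ∑ θ, π θ * expct (P θ) (V θ) := by
  obtain ⟨P₀, hP₀, hmax⟩ := exists_isFeasibleMenu_forall_le hV hF π μ
  have hm : Fintype.card X + N + 1 ≤ (N + 2) * Fintype.card X := by
    nlinarith [Fintype.card_pos (α := X)]
  obtain ⟨P, hP, hval, hsupp⟩ := exists_isFeasibleMenu_finSupp hV hF hP₀ hm
  refine ⟨P, hP.1, hP.2, hsupp, fun Q hQbary hQic => ?_⟩
  simpa only [hval] using hmax Q ⟨hQbary, hQic⟩

/-- screening with information. With finitely many receiver types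
`Θ = {1, …, N}`, continuous `V_θ, F_θ : Δ(X) → ℝ` and a prior `π ∈ Δ(Θ)`, the screening
problem (maximize `Σ_θ π(θ)·E_{P_θ}[V_θ]` over menus with barycenter `μ` satisfying the
IC constraints `E_{P_θ}[F_θ] ≥ E_{P_{θ'}}[F_θ]`) attains its supremum at a menu in which
each `P*_θ` has support of size at most `(N+2)·|X|`. -/
theorem statement_19 {X : Type*} [Fintype X] [Nonempty X] {N : ℕ}
    (V F : Fin N → stdSimplex ℝ X → ℝ)
    (hV : ∀ θ, Continuous (V θ)) (hF : ∀ θ, Continuous (F θ))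
    (π : Fin N → ℝ) (hπ0 : ∀ θ, 0 ≤ π θ) (hπ1 : ∑ θ, π θ = 1)
    (μ : stdSimplex ℝ X) :
    ∃ P : Fin N → ProbabilityMeasure (stdSimplex ℝ X),
      (∀ θ, isBary (P θ) μ) ∧
      (∀ θ θ', expct (P θ') (F θ) ≤ expct (P θ) (F θ)) ∧
      (∀ θ, finSupp (P θ) ((N + 2) * Fintype.card X)) ∧
      ∀ Q : Fin N → ProbabilityMeasure (stdSimplex ℝ X),
        (∀ θ, isBary (Q θ) μ) →
        (∀ θ θ', expct (Q θ') (F θ) ≤ expct (Q θ) (F θ)) →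
        ∑ θ, π θ * expct (Q θ) (V θ) ≤ ∑ θ, π θ * expct (P θ) (V θ) :=
  statement_19_general V F hV hF π μ
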